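/- arXiv:0711.0350 — 2 statements merged into one kernel-verified Lean document; each statement's English description precedes it below -/
import Mathlib

section
/- With the stopping times ζ_j as defined via quantized block recurrences, for every fixed n ≥ 0 the partition cells [X_{ζ_j - n}]^j form, for all sufficiently large j, a decreasing sequence of intervals whose diameters tend to 0 almost surely as j → ∞. -/
open MeasureTheory Filter Set

noncomputable section

/-- `Q k x` is the cell of the `k`-th partition containing `x`: a nested sequence of
countable partitions of `ℝ` into intervals whose cells shrink to points. -/
def IsNestedIntervalQuantizer (Q : ℕ → ℝ → Set ℝ) : Prop :=
  (∀ k x, x ∈ Q k x) ∧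
  (∀ k x, (Q k x).OrdConnected) ∧
  (∀ k x y, Q k x = Q k y ∨ Disjoint (Q k x) (Q k y)) ∧
  (∀ k, (Set.range (Q k)).Countable) ∧
  (∀ k x, Q (k + 1) x ⊆ Q k x) ∧
  (∀ x, Filter.Tendsto (fun k => EMetric.diam (Q k x)) Filter.atTop (nhds 0))

/-- Block lengths `l k`: nondecreasing, `1 ≤ l k ≤ k`, tending to infinity. -/
def GoodLengths (l : ℕ → ℕ) : Prop :=
  Monotone l ∧ (∀ k, 1 ≤ l k) ∧ (∀ k, 1 ≤ k → l k ≤ k) ∧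
    Filter.Tendsto l Filter.atTop Filter.atTop

/-- Two-sided stationarity of a real valued process. -/
def IsStationaryRealProcess {Ω : Type*} [MeasurableSpace Ω] (μ : Measure Ω) (X : ℤ → Ω → ℝ) : Prop :=
  Measure.map (fun ω (n : ℤ) => X (n + 1) ω) μ = Measure.map (fun ω (n : ℤ) => X n ω) μ

variable {Ω : Type*}

/-- `recEta Q l X k b ω` is the waiting time for the next recurrence of the `P_k`-quantized
block of length `l k` ending at position `b`. -/
def recEta (Q : ℕ → ℝ → Set ℝ) (l : ℕ → ℕ) (X : ℤ → Ω → ℝ) (k : ℕ) (b : ℤ) (ω : Ω) : ℕ :=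
  sInf {t : ℕ | 0 < t ∧ ∀ i < l k, Q k (X (b + t - i) ω) = Q k (X (b - i) ω)}

/-- The stopping times `ζ_k` defined by quantized block recurrence. -/
def recZeta (Q : ℕ → ℝ → Set ℝ) (l : ℕ → ℕ) (X : ℤ → Ω → ℝ) : ℕ → Ω → ℤ
  | 0, _ => 0
  | k + 1, ω => recZeta Q l X k ω + recEta Q l X (k + 1) (recZeta Q l X k ω) ω

/-- The σ-field `σ(X_0^{ζ})` generated by the data segment `X_0, …, X_ζ`. -/
def sigmaSeg [MeasurableSpace Ω] (X : ℤ → Ω → ℝ) (ζ : Ω → ℤ) : MeasurableSpace Ω :=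
  MeasurableSpace.comap
    (fun ω => (ζ ω, fun n : ℕ => if (n : ℤ) ≤ ζ ω then X n ω else 0)) inferInstance

/-- The σ-field `σ(X_{-∞}^{ζ})` generated by the whole past up to time `ζ`. -/
def sigmaPastAt [MeasurableSpace Ω] (X : ℤ → Ω → ℝ) (ζ : Ω → ℤ) : MeasurableSpace Ω :=
  MeasurableSpace.comap (fun ω => (ζ ω, fun n : ℕ => X (ζ ω - n) ω)) inferInstance

/-- The σ-field `σ(X_{-∞}^{0})` of the infinite past. -/
def sigmaPast [MeasurableSpace Ω] (X : ℤ → Ω → ℝ) : MeasurableSpace Ω :=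
  MeasurableSpace.comap (fun ω => fun n : ℕ => X (-(n : ℤ)) ω) inferInstance

/-- The metric `d*` on one-sided sequences `(…, x_{-1}, x_0)`, with `x i` standing
for the coordinate `x_{-i}`. -/
def dstar (x y : ℕ → ℝ) : ℝ :=
  ∑' i : ℕ, (1 / 2 ^ (i + 1)) * (|x i - y i| / (1 + |x i - y i|))

/-- Continuity of `e` on the set `C` with respect to the metric `d*`. -/
def DStarContinuousOn (e : (ℕ → ℝ) → ℝ) (C : Set (ℕ → ℝ)) : Prop :=
  ∀ x ∈ C, ∀ ε > 0, ∃ δ > 0, ∀ y ∈ C, dstar x y < δ → |e y - e x| < ε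

end

/-!
The nesting is deterministic: once `l (j + 1) > n`, the block recurrence defining `ζ_{j+1}` puts
`X_{ζ_{j+1} - n}` in the same `P_{j+1}`-cell as `X_{ζ_j - n}`.

For the diameters, Kac's argument shows that shifting a stationary path to the next recurrence of
its current quantized block preserves the law of the path, so every `X_{ζ_j - n}` is distributed
like `X_{-n}` and almost surely the sequence does not escape to `±∞`. Nested intervals that keep
meeting a compact set and do not shrink have a common point `y`; the cells would then be the cells
of `y`, whose diameters do tend to `0`.
-/

open scoped Topology
open ProbabilityTheory

namespace Set.OrdConnected

variable {C : Set ℝ}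

lemma Ioo_subset_of_mem_closure_of_mem (hC : C.OrdConnected) {x p : ℝ} (hx : x ∈ closure C)
    (hp : p ∈ C) : Ioo x p ⊆ C := by
  intro z ⟨hxz, hzp⟩
  obtain ⟨w, hw, hxw⟩ := Metric.mem_closure_iff.1 hx (z - x) (by linarith)
  rw [Real.dist_eq, abs_lt] at hxw
  exact hC.out hw hp ⟨by linarith, hzp.le⟩

lemma Ioo_subset_of_mem_of_mem_closure (hC : C.OrdConnected) {p x : ℝ} (hp : p ∈ C)
    (hx : x ∈ closure C) : Ioo p x ⊆ C := by
  intro z ⟨hpz, hzx⟩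
  obtain ⟨w, hw, hxw⟩ := Metric.mem_closure_iff.1 hx (x - z) (by linarith)
  rw [Real.dist_eq, abs_lt] at hxw
  exact hC.out hp hw ⟨hpz.le, by linarith⟩

lemma inter_Icc_nonempty (hC : C.OrdConnected) {p q a b : ℝ} (hp : p ∈ C) (hq : q ∈ C)
    (hpb : p ≤ b) (haq : a ≤ q) (hab : a ≤ b) : (C ∩ Icc a b).Nonempty := by
  by_cases hap : a ≤ p
  · exact ⟨p, hp, hap, hpb⟩
  by_cases hqb : q ≤ b
  · exact ⟨q, hq, haq, hqb⟩
  exact ⟨a, hC.out hp hq ⟨by linarith, haq⟩, le_rfl, hab⟩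

end Set.OrdConnected

lemma exists_far_point_of_lt_ediam {C : Set ℝ} {x r : ℝ} (hr : ENNReal.ofReal r < Metric.ediam C) :
    (∃ p ∈ C, x + r / 2 ≤ p) ∨ ∃ p ∈ C, p ≤ x - r / 2 := by
  by_contra! h
  obtain ⟨hright, hleft⟩ := h
  refine hr.not_ge (Metric.ediam_le fun u hu v hv => ?_)
  rw [edist_dist, Real.dist_eq]
  refine ENNReal.ofReal_le_ofReal (abs_sub_le_iff.2 ⟨?_, ?_⟩) <;>
    linarith [hright u hu, hleft u hu, hright v hv, hleft v hv]

lemma exists_forall_mem_closure_of_antitone {C : ℕ → Set ℝ} (hC : Antitone C) {a b : ℝ}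
    (hab : ∀ j, (C j ∩ Icc a b).Nonempty) : ∃ z, ∀ j, z ∈ closure (C j) := by
  obtain ⟨z, hz⟩ := IsCompact.nonempty_iInter_of_sequence_nonempty_isCompact_isClosed
    (fun j => closure (C j) ∩ Icc a b)
    (fun j => inter_subset_inter_left _ (closure_mono (hC j.le_succ)))
    (fun j => (hab j).mono (inter_subset_inter_left _ subset_closure))
    (isCompact_Icc.inter_left isClosed_closure) (fun j => isClosed_closure.inter isClosed_Icc)
  exact ⟨z, fun j => (mem_iInter.1 hz j).1⟩

lemma exists_forall_mem_of_antitone_ordConnected {C : ℕ → Set ℝ} (hC : Antitone C)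
    (hconn : ∀ j, (C j).OrdConnected) {a b : ℝ} (hab : ∀ j, (C j ∩ Icc a b).Nonempty)
    (hdiam : ¬ Tendsto (fun j => Metric.ediam (C j)) atTop (𝓝 0)) : ∃ y, ∀ j, y ∈ C j := by
  obtain ⟨z, hz⟩ := exists_forall_mem_closure_of_antitone hC hab
  have hlim := tendsto_atTop_iInf fun i j hij => Metric.ediam_mono (hC hij)
  have hpos : 0 < ⨅ j, Metric.ediam (C j) :=
    pos_iff_ne_zero.2 fun h => hdiam (h ▸ hlim)
  obtain ⟨r, -, hr0, hr⟩ := ENNReal.lt_iff_exists_real_btwn.1 hpos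
  have hr0 : 0 < r := ENNReal.ofReal_pos.1 hr0
  have hlt : ∀ j, ENNReal.ofReal r < Metric.ediam (C j) := fun j => hr.trans_le (iInf_le _ j)
  by_cases hright : ∀ j, ∃ p ∈ C j, z + r / 2 ≤ p
  · refine ⟨z + r / 4, fun j => ?_⟩
    obtain ⟨p, hp, hzp⟩ := hright j
    exact (hconn j).Ioo_subset_of_mem_closure_of_mem (hz j) hp ⟨by linarith, by linarith⟩
  · push Not at hright
    obtain ⟨j₀, hj₀⟩ := hright
    refine ⟨z - r / 4, fun j => ?_⟩
    have hleft : ∃ p ∈ C (max j j₀), p ≤ z - r / 2 :=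
      (exists_far_point_of_lt_ediam (hlt _)).resolve_left fun ⟨p, hp, hzp⟩ =>
        (hj₀ p (hC (le_max_right j j₀) hp)).not_ge hzp
    obtain ⟨p, hp, hpz⟩ := hleft
    exact hC (le_max_left j j₀) <|
      (hconn _).Ioo_subset_of_mem_of_mem_closure hp (hz _) ⟨by linarith, by linarith⟩

namespace IsNestedIntervalQuantizer

variable {Q : ℕ → ℝ → Set ℝ}

lemma mem_self (hQ : IsNestedIntervalQuantizer Q) (k : ℕ) (x : ℝ) : x ∈ Q k x := hQ.1 k x

lemma ordConnected (hQ : IsNestedIntervalQuantizer Q) (k : ℕ) (x : ℝ) : (Q k x).OrdConnected :=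
  hQ.2.1 k x

lemma measurableSet (hQ : IsNestedIntervalQuantizer Q) (k : ℕ) (x : ℝ) :
    MeasurableSet (Q k x) :=
  (hQ.ordConnected k x).measurableSet

lemma countable_range (hQ : IsNestedIntervalQuantizer Q) (k : ℕ) : (range (Q k)).Countable :=
  hQ.2.2.2.1 k

lemma succ_subset (hQ : IsNestedIntervalQuantizer Q) (k : ℕ) (x : ℝ) : Q (k + 1) x ⊆ Q k x :=
  hQ.2.2.2.2.1 k x

lemma tendsto_ediam (hQ : IsNestedIntervalQuantizer Q) (x : ℝ) :
    Tendsto (fun k => Metric.ediam (Q k x)) atTop (𝓝 0) :=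
  hQ.2.2.2.2.2 x

lemma eq_of_mem (hQ : IsNestedIntervalQuantizer Q) {k : ℕ} {x y : ℝ} (h : x ∈ Q k y) :
    Q k x = Q k y :=
  (hQ.2.2.1 k x y).resolve_right fun hd => hd.notMem_of_mem_left (hQ.mem_self k x) h

lemma eq_iff_mem (hQ : IsNestedIntervalQuantizer Q) {k : ℕ} {x y : ℝ} :
    Q k x = Q k y ↔ x ∈ Q k y :=
  ⟨fun h => h ▸ hQ.mem_self k x, hQ.eq_of_mem⟩

lemma tendsto_ediam_of_eventually_nested (hQ : IsNestedIntervalQuantizer Q) {x : ℕ → ℝ}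
    (hnest : ∀ᶠ j in atTop, Q (j + 1) (x (j + 1)) ⊆ Q j (x j))
    (hT : ¬ Tendsto x atTop atTop) (hB : ¬ Tendsto x atTop atBot) :
    Tendsto (fun j => Metric.ediam (Q j (x j))) atTop (𝓝 0) := by
  obtain ⟨J, hJ⟩ := eventually_atTop.1 hnest
  set C : ℕ → Set ℝ := fun m => Q (m + J) (x (m + J))
  have hC : Antitone C := antitone_nat_of_succ_le fun m => by
    simpa only [C, Nat.add_right_comm m 1 J] using hJ (m + J) (Nat.le_add_left J m)
  have hxC : ∀ m m', m ≤ m' → x (m' + J) ∈ C m := fun m m' h =>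
    hC h (hQ.mem_self _ _)
  rw [← tendsto_add_atTop_iff_nat J]
  by_contra hdiam
  rw [← tendsto_add_atTop_iff_nat J, tendsto_atTop] at hT
  rw [← tendsto_add_atTop_iff_nat J, tendsto_atBot] at hB
  push Not at hT hB
  obtain ⟨b, hb⟩ := hT
  obtain ⟨a, ha⟩ := hB
  have hmeet : ∀ m, (C m ∩ Icc (min a b) (max a b)).Nonempty := fun m => by
    obtain ⟨p, hmp, hp⟩ := (frequently_atTop.1 hb) m
    obtain ⟨q, hmq, hq⟩ := (frequently_atTop.1 ha) m
    exact (hQ.ordConnected _ _).inter_Icc_nonempty (hxC m p hmp) (hxC m q hmq)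
      (hp.le.trans (le_max_right a b)) ((min_le_left a b).trans hq.le) min_le_max
  obtain ⟨y, hy⟩ := exists_forall_mem_of_antitone_ordConnected hC
    (fun m => hQ.ordConnected _ _) hmeet hdiam
  refine hdiam ((tendsto_add_atTop_iff_nat J).2 (hQ.tendsto_ediam y) |>.congr fun m => ?_)
  rw [hQ.eq_of_mem (hy m)]

end IsNestedIntervalQuantizer

lemma Nat.sInf_eq_iff {s : Set ℕ} {t : ℕ} : sInf s = t ↔ IsLeast s t ∨ (t = 0 ∧ s = ∅) := by
  constructor
  · rintro rfl
    rcases s.eq_empty_or_nonempty with hs | hs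
    · exact Or.inr ⟨by rw [hs, Nat.sInf_empty], hs⟩
    · exact Or.inl ⟨Nat.sInf_mem hs, fun _ => Nat.sInf_le⟩
  · rintro (h | ⟨rfl, rfl⟩)
    · exact h.csInf_eq
    · exact Nat.sInf_empty

lemma measurable_nat_sInf {E : Type*} [MeasurableSpace E] {S : E → Set ℕ}
    (hS : ∀ t, MeasurableSet {y | t ∈ S y}) : Measurable fun y => sInf (S y) := by
  refine measurable_to_countable' fun t => ?_
  have hS' : ∀ s, Measurable fun y => s ∈ S y := fun s => measurableSet_setOfPred.1 (hS s)
  simp only [preimage, mem_singleton_iff, Nat.sInf_eq_iff, IsLeast, lowerBounds,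
    Set.eq_empty_iff_forall_notMem, mem_ofPred_eq]
  exact measurableSet_setOfPred.2 (by fun_prop)

section ReturnTime

variable {E β : Type*} {c : E → β}

/-- The value is `0` when the orbit of `y` never comes back to the class of `y`. -/
noncomputable def returnTime (f : E → E) (c : E → β) (y : E) : ℕ :=
  sInf {t : ℕ | 0 < t ∧ c (f^[t] y) = c y}

noncomputable def returnMap (f : E → E) (c : E → β) (y : E) : E :=
  f^[returnTime f c y] y

lemma returnTime_iterate_of_leftInverse {f g : E → E} (hgf : Function.LeftInverse g f)
    {t : ℕ} (ht : 0 < t) {y : E} (hy : returnTime f c y = t) :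
    returnTime g c (f^[t] y) = t := by
  have hback : ∀ s ≤ t, g^[s] (f^[t] y) = f^[t - s] y := fun s hs => by
    obtain ⟨u, rfl⟩ := Nat.exists_eq_add_of_le hs
    rw [Function.iterate_add_apply, hgf.iterate s, Nat.add_sub_cancel_left]
  rw [returnTime, Nat.sInf_eq_iff, or_iff_left (by omega)] at hy ⊢
  refine ⟨⟨ht, ?_⟩, ?_⟩
  · rw [hback t le_rfl, Nat.sub_self, Function.iterate_zero_apply]
    exact hy.1.2.symm
  · rintro s ⟨hs, hcs⟩
    by_contra! hst
    have : t ≤ t - s := hy.2 ⟨by omega, by rw [← hback s hst.le, hcs, hy.1.2]⟩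
    omega

variable [MeasurableSpace E] {ν : Measure E}

lemma measurableSet_setOf_pattern_comp_eq (hc : (range c).Countable)
    (hcm : ∀ y, MeasurableSet {z | c z = c y}) {g : E → E} (hg : Measurable g) :
    MeasurableSet {y | c (g y) = c y} := by
  have : {y | c (g y) = c y} = ⋃ p ∈ range c, g ⁻¹' {z | c z = p} ∩ {z | c z = p} := by
    ext y
    simp only [mem_ofPred_eq, mem_iUnion, mem_inter_iff, mem_preimage, mem_range, exists_prop,
      exists_exists_eq_and]
    exact ⟨fun h => ⟨y, h, rfl⟩, fun ⟨_, h₁, h₂⟩ => h₁.trans h₂.symm⟩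
  rw [this]
  refine .biUnion hc ?_
  rintro _ ⟨y₀, rfl⟩
  exact (hg (hcm y₀)).inter (hcm y₀)

lemma measurable_returnTime {f : E → E} (hf : Measurable f) (hc : (range c).Countable)
    (hcm : ∀ y, MeasurableSet {z | c z = c y}) : Measurable (returnTime f c) :=
  measurable_nat_sInf fun t => (MeasurableSet.const (0 < t)).inter
    (measurableSet_setOf_pattern_comp_eq hc hcm (hf.iterate t))

lemma measurable_returnMap {f : E → E} (hf : Measurable f) (hc : (range c).Countable)
    (hcm : ∀ y, MeasurableSet {z | c z = c y}) : Measurable (returnMap f c) := by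
  have : Measurable fun p : E × ℕ => f^[p.2] p.1 :=
    measurable_from_prod_countable_left fun t => hf.iterate t
  exact this.comp (measurable_id.prodMk (measurable_returnTime hf hc hcm))

/-- Poincaré recurrence, applied to each of the countably many pattern classes. -/
lemma MeasureTheory.Conservative.measure_returnTime_eq_zero {f : E → E} (hf : Conservative f ν)
    (hc : (range c).Countable) (hcm : ∀ y, MeasurableSet {z | c z = c y}) :
    ν (returnTime f c ⁻¹' {0}) = 0 := by
  have hrec : ∀ᵐ y ∂ν, ∀ p ∈ range c, c y = p → ∃ᶠ t in atTop, c (f^[t] y) = p := by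
    refine (ae_ball_iff hc).2 ?_
    rintro _ ⟨y₀, rfl⟩
    exact hf.ae_mem_imp_frequently_image_mem (hcm y₀).nullMeasurableSet
  refine measure_mono_null (fun y hy => ?_) (ae_iff.1 hrec)
  intro hy'
  obtain ⟨t, ht, hty⟩ := frequently_atTop.1 (hy' (c y) ⟨y, rfl⟩ rfl) 1
  have hmem := Nat.sInf_mem (s := {t : ℕ | 0 < t ∧ c (f^[t] y) = c y}) ⟨t, ht, hty⟩
  exact (hmem.1.ne' : returnTime f c y ≠ 0) hy

lemma returnTime_symm_iterate_eq_iff (f : E ≃ᵐ E) {t : ℕ} (ht : 0 < t) (y : E) :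
    returnTime f.symm c (f^[t] y) = t ↔ returnTime f c y = t := by
  have hleft : Function.LeftInverse f.symm f := f.symm_apply_apply
  refine ⟨fun h => ?_, returnTime_iterate_of_leftInverse hleft ht⟩
  have := returnTime_iterate_of_leftInverse (f := f.symm) (g := f) f.apply_symm_apply ht h
  rwa [hleft.iterate t] at this

lemma measure_eq_tsum_measure_fiber_inter {τ : E → ℕ} (hτ : Measurable τ) (B : Set E) :
    ν B = ∑' t, ν (τ ⁻¹' {t} ∩ B) := by
  have hfib : ∀ t, MeasurableSet (τ ⁻¹' {t}) := fun t => hτ (measurableSet_singleton t)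
  calc ν B = ν.restrict B (⋃ t, τ ⁻¹' {t}) := by
        rw [← preimage_iUnion, iUnion_of_singleton, preimage_univ, Measure.restrict_apply_univ]
    _ = ∑' t, ν.restrict B (τ ⁻¹' {t}) :=
        measure_iUnion (fun s t hst => (disjoint_singleton.2 hst).preimage τ) hfib
    _ = ∑' t, ν (τ ⁻¹' {t} ∩ B) := tsum_congr fun t => Measure.restrict_apply (hfib t)

/-- Kac's argument: `{returnTime f c = t}` is carried by `f^[t]` onto the set where the
backward return time is `t`, and both families of sets partition the space up to null sets. -/
theorem measurePreserving_returnMap [IsFiniteMeasure ν] {f : E ≃ᵐ E}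
    (hf : MeasurePreserving f ν ν) (hc : (range c).Countable)
    (hcm : ∀ y, MeasurableSet {z | c z = c y}) : MeasurePreserving (returnMap f c) ν ν := by
  refine ⟨measurable_returnMap f.measurable hc hcm, ?_⟩
  ext A hA
  have hτ := measurable_returnTime f.measurable hc hcm
  have hσ := measurable_returnTime f.symm.measurable hc hcm
  rw [Measure.map_apply (measurable_returnMap f.measurable hc hcm) hA,
    measure_eq_tsum_measure_fiber_inter hτ, measure_eq_tsum_measure_fiber_inter hσ]
  refine tsum_congr fun t => ?_
  rcases t.eq_zero_or_pos with rfl | ht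
  · rw [measure_mono_null inter_subset_left
        (hf.conservative.measure_returnTime_eq_zero hc hcm),
      measure_mono_null inter_subset_left
        ((hf.symm f).conservative.measure_returnTime_eq_zero hc hcm)]
  · have hfib : returnTime f c ⁻¹' {t} ∩ returnMap f c ⁻¹' A =
        f^[t] ⁻¹' (returnTime f.symm c ⁻¹' {t} ∩ A) := by
      ext y
      simp only [mem_inter_iff, mem_preimage, mem_singleton_iff,
        returnTime_symm_iterate_eq_iff f ht, returnMap]
      exact ⟨fun ⟨h, hA⟩ => ⟨h, h ▸ hA⟩, fun ⟨h, hA⟩ => ⟨h, h ▸ hA⟩⟩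
    rw [hfib, (hf.iterate t).measure_preimage
      ((hσ (measurableSet_singleton t)).inter hA).nullMeasurableSet]

end ReturnTime

section PathShift

variable {α : Type*} [MeasurableSpace α]

def pathShift : (ℤ → α) ≃ᵐ (ℤ → α) where
  toFun y n := y (n + 1)
  invFun y n := y (n - 1)
  left_inv y := by simp
  right_inv y := by simp
  measurable_toFun := measurable_pi_lambda _ fun n => measurable_pi_apply (n + 1)
  measurable_invFun := measurable_pi_lambda _ fun n => measurable_pi_apply (n - 1)

lemma pathShift_iterate_apply (t : ℕ) (y : ℤ → α) (n : ℤ) :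
    (⇑pathShift)^[t] y n = y (n + t) := by
  induction t generalizing n with
  | zero => simp
  | succ t ih =>
    rw [Function.iterate_succ_apply',
      show ∀ z : ℤ → α, pathShift z n = z (n + 1) from fun _ => rfl, ih]
    push_cast
    ring_nf

end PathShift

lemma IsStationaryRealProcess.measurePreserving_pathShift {Ω : Type*} [MeasurableSpace Ω]
    {μ : Measure Ω} {X : ℤ → Ω → ℝ} (hX : ∀ n, Measurable (X n))
    (hstat : IsStationaryRealProcess μ X) :
    MeasurePreserving pathShift (μ.map fun ω n => X n ω) (μ.map fun ω n => X n ω) := by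
  refine ⟨pathShift.measurable, ?_⟩
  rw [Measure.map_map pathShift.measurable (measurable_pi_lambda _ hX)]
  exact hstat

def blockCells (q : ℝ → Set ℝ) (m : ℕ) (y : ℤ → ℝ) : Fin m → Set ℝ :=
  fun i => q (y (-i))

namespace IsNestedIntervalQuantizer

variable {Q : ℕ → ℝ → Set ℝ}

lemma countable_range_blockCells (hQ : IsNestedIntervalQuantizer Q) (k m : ℕ) :
    (range (blockCells (Q k) m)).Countable :=
  (countable_pi fun _ => hQ.countable_range k).mono <| by
    rintro _ ⟨y, rfl⟩ i
    exact ⟨_, rfl⟩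

lemma measurableSet_blockCells_eq (hQ : IsNestedIntervalQuantizer Q) (k m : ℕ) (y : ℤ → ℝ) :
    MeasurableSet {z | blockCells (Q k) m z = blockCells (Q k) m y} := by
  have : {z | blockCells (Q k) m z = blockCells (Q k) m y} =
      ⋂ i : Fin m, (fun z : ℤ → ℝ => z (-i)) ⁻¹' Q k (y (-i)) := by
    ext z
    simp only [mem_ofPred_eq, blockCells, funext_iff, mem_iInter, mem_preimage, hQ.eq_iff_mem]
  rw [this]
  exact .iInter fun i => measurable_pi_apply _ (hQ.measurableSet k _)

end IsNestedIntervalQuantizer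

section Recurrence

variable {Ω : Type*} {Q : ℕ → ℝ → Set ℝ} {l : ℕ → ℕ} {X : ℤ → Ω → ℝ}

lemma recEta_eq_returnTime (k : ℕ) (b : ℤ) (ω : Ω) :
    recEta Q l X k b ω =
      returnTime pathShift (blockCells (Q k) (l k)) (fun m => X (b + m) ω) := by
  simp only [recEta, returnTime, blockCells, funext_iff, pathShift_iterate_apply, Fin.forall_iff]
  congr! 5 with t i hi
  ring_nf

lemma recZeta_succ_path (j : ℕ) (ω : Ω) :
    (fun m => X (recZeta Q l X (j + 1) ω + m) ω) =
      returnMap pathShift (blockCells (Q (j + 1)) (l (j + 1)))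
        (fun m => X (recZeta Q l X j ω + m) ω) := by
  funext m
  simp only [returnMap, pathShift_iterate_apply, recZeta, recEta_eq_returnTime]
  ring_nf

lemma measurePreserving_recZeta_path [MeasurableSpace Ω] {μ : Measure Ω} [IsFiniteMeasure μ]
    (hX : ∀ n, Measurable (X n)) (hstat : IsStationaryRealProcess μ X)
    (hQ : IsNestedIntervalQuantizer Q) (j : ℕ) :
    MeasurePreserving (fun ω m => X (recZeta Q l X j ω + m) ω) μ (μ.map fun ω n => X n ω) := by
  induction j with
  | zero =>
    simpa [recZeta] using (measurable_pi_lambda _ hX).measurePreserving μ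
  | succ j ih =>
    rw [show (fun ω m => X (recZeta Q l X (j + 1) ω + m) ω) = returnMap pathShift
        (blockCells (Q (j + 1)) (l (j + 1))) ∘ fun ω m => X (recZeta Q l X j ω + m) ω from
      funext (recZeta_succ_path j)]
    exact (measurePreserving_returnMap (hstat.measurePreserving_pathShift hX)
      (hQ.countable_range_blockCells _ _) (hQ.measurableSet_blockCells_eq _ _)).comp ih

lemma cell_recZeta_succ_eq {n j : ℕ} (hn : n < l (j + 1)) (ω : Ω) :
    Q (j + 1) (X (recZeta Q l X (j + 1) ω - n) ω) = Q (j + 1) (X (recZeta Q l X j ω - n) ω) := by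
  set S := {t : ℕ | 0 < t ∧ ∀ i < l (j + 1),
    Q (j + 1) (X (recZeta Q l X j ω + t - i) ω) = Q (j + 1) (X (recZeta Q l X j ω - i) ω)}
  have hζ : recZeta Q l X (j + 1) ω = recZeta Q l X j ω + (sInf S : ℕ) := rfl
  rcases S.eq_empty_or_nonempty with hS | hS
  · rw [hζ, hS, Nat.sInf_empty, Nat.cast_zero, add_zero]
  · rw [hζ]
    exact (Nat.sInf_mem hS).2 n hn

end Recurrence

section Escape

variable {Ω : Type*} [MeasurableSpace Ω] {μ : Measure Ω} [IsFiniteMeasure μ] {Z : ℕ → Ω → ℝ}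

lemma ae_not_tendsto_atTop_of_identDistrib (hZ : ∀ j, IdentDistrib (Z j) (Z 0) μ μ) :
    ∀ᵐ ω ∂μ, ¬ Tendsto (fun j => Z j ω) atTop atTop := by
  set tail : ℕ → Set Ω := fun M => {ω | (M : ℝ) ≤ Z 0 ω}
  have hanti : Antitone tail := fun M M' h ω (hω : (M' : ℝ) ≤ Z 0 ω) =>
    (Nat.cast_le.2 h).trans hω
  have htail : Tendsto (fun M => μ (tail M)) atTop (𝓝 0) := by
    have hempty : ⋂ M, tail M = ∅ := eq_empty_of_forall_notMem fun ω hω => by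
      obtain ⟨M, hM⟩ := exists_nat_gt (Z 0 ω)
      exact (mem_iInter.1 hω M).not_gt hM
    have := tendsto_measure_iInter_atTop (μ := μ) (s := tail)
      (fun M => (hZ 0).aemeasurable_fst.nullMeasurableSet_preimage measurableSet_Ici)
      hanti ⟨0, measure_ne_top μ _⟩
    rwa [hempty, measure_empty] at this
  have hle : ∀ M : ℕ, μ {ω | Tendsto (fun j => Z j ω) atTop atTop} ≤ μ (tail M) := fun M =>
    calc μ {ω | Tendsto (fun j => Z j ω) atTop atTop}
        ≤ μ (⋃ J, {ω | ∀ j ≥ J, (M : ℝ) ≤ Z j ω}) :=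
          measure_mono fun ω hω => mem_iUnion.2 (eventually_atTop.1 (tendsto_atTop.1 hω M))
      _ = ⨆ J, μ {ω | ∀ j ≥ J, (M : ℝ) ≤ Z j ω} :=
          Monotone.measure_iUnion fun J J' h ω (hω : ∀ j ≥ J, _) j hj => hω j (h.trans hj)
      _ ≤ μ (tail M) := iSup_le fun J =>
          (measure_mono (t := Z J ⁻¹' Ici (M : ℝ))
            fun ω (hω : ∀ j ≥ J, (M : ℝ) ≤ Z j ω) => hω J le_rfl).trans
            ((hZ J).measure_mem_eq measurableSet_Ici).le
  rw [ae_iff]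
  simpa using nonpos_iff_eq_zero.1 (ge_of_tendsto' htail hle)

lemma ae_not_tendsto_atBot_of_identDistrib (hZ : ∀ j, IdentDistrib (Z j) (Z 0) μ μ) :
    ∀ᵐ ω ∂μ, ¬ Tendsto (fun j => Z j ω) atTop atBot := by
  filter_upwards [ae_not_tendsto_atTop_of_identDistrib (Z := fun j ω => -Z j ω)
    fun j => (hZ j).comp measurable_neg] with ω hω
  rwa [← tendsto_neg_atTop_iff]

end Escape

lemma identDistrib_recZeta_sub {Ω : Type*} [MeasurableSpace Ω] {μ : Measure Ω}
    [IsFiniteMeasure μ] {X : ℤ → Ω → ℝ} {Q : ℕ → ℝ → Set ℝ} {l : ℕ → ℕ}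
    (hX : ∀ n, Measurable (X n)) (hstat : IsStationaryRealProcess μ X)
    (hQ : IsNestedIntervalQuantizer Q) (n j : ℕ) :
    IdentDistrib (fun ω => X (recZeta Q l X j ω - n) ω)
      (fun ω => X (recZeta Q l X 0 ω - n) ω) μ μ := by
  have hY := measurePreserving_recZeta_path (l := l) hX hstat hQ
  simp only [sub_eq_add_neg]
  exact (IdentDistrib.mk (hY j).measurable.aemeasurable
    (hY 0).measurable.aemeasurable (by rw [(hY j).map_eq, (hY 0).map_eq])).comp
    (measurable_pi_apply (-(n : ℤ)))

/-- For every fixed `n ≥ 0`, the partition cells `[X_{ζ_j − n}]^j` eventually form a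
decreasing sequence of intervals whose diameters tend to `0` almost surely. -/
theorem intermittent_cells_shrink
    {Ω : Type*} [MeasurableSpace Ω] (μ : Measure Ω) [IsProbabilityMeasure μ]
    (X : ℤ → Ω → ℝ) (hXmeas : ∀ n, Measurable (X n)) (hstat : IsStationaryRealProcess μ X)
    (Q : ℕ → ℝ → Set ℝ) (hQ : IsNestedIntervalQuantizer Q)
    (l : ℕ → ℕ) (hl : GoodLengths l) :
    ∀ n : ℕ, ∀ᵐ ω ∂μ,
      (∀ᶠ j in Filter.atTop,
        Q (j + 1) (X (recZeta Q l X (j + 1) ω - n) ω) ⊆ Q j (X (recZeta Q l X j ω - n) ω)) ∧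
      Filter.Tendsto (fun j => EMetric.diam (Q j (X (recZeta Q l X j ω - n) ω)))
        Filter.atTop (nhds 0) := by
  intro n
  have hnest : ∀ ω, ∀ᶠ j in atTop,
      Q (j + 1) (X (recZeta Q l X (j + 1) ω - n) ω) ⊆ Q j (X (recZeta Q l X j ω - n) ω) :=
    fun ω => ((hl.2.2.2.comp (tendsto_add_atTop_nat 1)).eventually_gt_atTop n).mono
      fun j hj => (cell_recZeta_succ_eq hj ω).trans_subset (hQ.succ_subset j _)
  have hlaw := identDistrib_recZeta_sub (l := l) hXmeas hstat hQ n
  filter_upwards [ae_not_tendsto_atTop_of_identDistrib hlaw,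
    ae_not_tendsto_atBot_of_identDistrib hlaw] with ω hT hB
  exact ⟨hnest ω, hQ.tendsto_ediam_of_eventually_nested (hnest ω) hT hB⟩
end

section
/- Let {X_n} be a stationary real-valued time series, and suppose the partitions P_k used for quantization are finite. If for some ε > 0 the series Σ_{k≥1} (k+1) 2^{-l_k ε} converges, then the stopping times satisfy ζ_k < |P_k|^{l_k} · 2^{l_k ε} eventually almost surely, where |P_k| is the number of cells of P_k. -/
open MeasureTheory Filter Set

/-!
Push the process forward to the path space `ℤ → ℝ`, on which stationarity makes the shift
measure preserving. There the waiting time `recEta` at position `0` is the time the shifted path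
needs to return to the cell of its own quantized block, so Kac's lemma, summed over the at most
`|P_k|^{l_k}` blocks, bounds its expectation by `|P_k|^{l_k}`. Recurrence chains started at
different positions never merge, hence looking at the path from the random time `ζ_k` cannot
increase the probability of any event; each increment of `ζ_k` therefore obeys the same bound and
`E ζ_k ≤ k |P_k|^{l_k}`. Markov's inequality and Borel–Cantelli conclude.
-/

open scoped ENNReal

local notation "coord" => (Function.eval : ℤ → (ℤ → ℝ) → ℝ)

section

variable {α : Type*} [MeasurableSpace α]

theorem measurable_nat_sInf_s5 {p : ℕ → α → Prop} (hp : ∀ t, MeasurableSet {x | p t x}) :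
    Measurable fun x => sInf {t | p t x} := by
  refine measurable_to_countable' fun n => ?_
  have hiff : ∀ x, sInf {t | p t x} = n ↔
      (p n x ∧ ∀ m < n, ¬ p m x) ∨ (n = 0 ∧ ∀ m, ¬ p m x) := by
    intro x
    rcases eq_empty_or_nonempty {t | p t x} with he | hne
    · have hnone : ∀ m, ¬ p m x := fun m hm => he.subset hm
      simp [hnone, eq_comm]
    · have hex : ∃ m, p m x := hne
      constructor
      · rintro rfl
        exact .inl ⟨Nat.sInf_mem hne, fun m hm => Nat.notMem_of_lt_sInf hm⟩
      · rintro (⟨hn, hlt⟩ | ⟨-, hnone⟩)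
        · exact le_antisymm (Nat.sInf_le hn) (not_lt.1 fun h => hlt _ h (Nat.sInf_mem hne))
        · exact absurd hex (not_exists.2 hnone)
  have hset : (fun x => sInf {t | p t x}) ⁻¹' {n} =
      ({x | p n x} ∩ ⋂ m ∈ Set.Iio n, {x | p m x}ᶜ) ∪
        {x | n = 0} ∩ ⋂ m, {x | p m x}ᶜ := by
    ext x
    simp [hiff]
  rw [hset]
  exact ((hp n).inter (.biInter (Set.to_countable _) fun m _ => (hp m).compl)).union
    ((MeasurableSet.const _).inter (.iInter fun m => (hp m).compl))

theorem Measurable.comp_countable_index {β γ : Type*} [MeasurableSpace β] [Countable β]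
    [MeasurableSingletonClass β] [MeasurableSpace γ] {f : α → β} {g : β → α → γ}
    (hf : Measurable f) (hg : ∀ b, Measurable (g b)) : Measurable fun x => g (f x) x :=
  (measurable_from_prod_countable_left (f := fun q : α × β => g q.2 q.1) hg).comp
    (measurable_id.prodMk hf)

theorem lintegral_natCast_eq_tsum {μ : Measure α} {f : α → ℕ} (hf : Measurable f) :
    ∫⁻ x, (f x : ℝ≥0∞) ∂μ = ∑' t : ℕ, μ {x | t < f x} := by
  have hsum : ∀ x, (f x : ℝ≥0∞) = ∑' t : ℕ, {x | t < f x}.indicator 1 x := by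
    intro x
    rw [tsum_eq_sum (s := Finset.range (f x)) fun t ht => by simpa using ht]
    simp [Set.indicator_apply, Finset.filter_true_of_mem fun t ht => Finset.mem_range.1 ht]
  have hmeas : ∀ t : ℕ, MeasurableSet {x | t < f x} := fun t => hf measurableSet_Ioi
  simp_rw [hsum]
  rw [lintegral_tsum fun t => (measurable_one.indicator (hmeas t)).aemeasurable]
  exact tsum_congr fun t => lintegral_indicator_one (hmeas t)

theorem ae_eventually_lt_of_summable {μ : Measure α} {f : ℕ → α → ℝ} {R b : ℕ → ℝ}
    (hb : Summable b)
    (h : ∀ k, μ {x | R k ≤ f k x} ≤ ENNReal.ofReal (b k)) :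
    ∀ᵐ x ∂μ, ∀ᶠ k in atTop, f k x < R k := by
  filter_upwards [ae_eventually_notMem
    (ne_top_of_le_ne_top hb.tsum_ofReal_ne_top (ENNReal.tsum_le_tsum h))] with x hx
  exact hx.mono fun k hk => not_le.1 hk

end

section FiberReturnTime

variable {α β : Type*} [MeasurableSpace α] {μ : Measure α} {T : α → α}

theorem sum_measure_no_return_add_measure_avoid (hT : MeasurePreserving T μ μ) {A : Set α}
    (hA : MeasurableSet A) (M : ℕ) :
    ∑ t ∈ Finset.range M, μ (A ∩ {x | ∀ s, 0 < s → s ≤ t → T^[s] x ∉ A}) +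
      μ {x | ∀ s < M, T^[s] x ∉ A} = μ univ := by
  have hmeas : ∀ t, MeasurableSet {x | ∀ s < t, T^[s] x ∉ A} := fun t => by
    simp only [ofPred_forall]
    exact .iInter fun s => .iInter fun _ => (hT.measurable.iterate s hA).compl
  induction M with
  | zero => simp
  | succ M ih =>
    have hpre : T ⁻¹' {x | ∀ s < M, T^[s] x ∉ A} =
        (A ∩ {x | ∀ s, 0 < s → s ≤ M → T^[s] x ∉ A}) ∪ {x | ∀ s < M + 1, T^[s] x ∉ A} := by
      ext x
      simp only [mem_preimage, mem_ofPred_eq, mem_union, mem_inter_iff,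
        ← Function.iterate_succ_apply]
      constructor
      · intro h
        by_cases hx : x ∈ A
        · refine .inl ⟨hx, fun s hs hsM => ?_⟩
          simpa [Nat.sub_add_cancel hs] using h (s - 1) (by omega)
        · refine .inr fun s hs => ?_
          rcases s with _ | s
          · exact hx
          · exact h s (by omega)
      · rintro (⟨-, h⟩ | h) s hs
        · exact h (s + 1) s.succ_pos hs
        · exact h (s + 1) (by omega)
    have hdisj : Disjoint (A ∩ {x | ∀ s, 0 < s → s ≤ M → T^[s] x ∉ A})
        {x | ∀ s < M + 1, T^[s] x ∉ A} :=
      Set.disjoint_left.2 fun x hx h => h 0 M.succ_pos hx.1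
    rw [Finset.sum_range_succ, add_assoc, ← measure_union hdisj (hmeas _), ← hpre,
      hT.measure_preimage (hmeas M).nullMeasurableSet, ih]

theorem tsum_measure_no_return_le (hT : MeasurePreserving T μ μ) {A : Set α}
    (hA : MeasurableSet A) :
    ∑' t, μ (A ∩ {x | ∀ s, 0 < s → s ≤ t → T^[s] x ∉ A}) ≤ μ univ :=
  ENNReal.tsum_le_of_sum_range_le fun M =>
    le_self_add.trans_eq (sum_measure_no_return_add_measure_avoid hT hA M)

noncomputable def fiberReturnTime (T : α → α) (φ : α → β) (x : α) : ℕ :=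
  sInf {n | 0 < n ∧ φ (T^[n] x) = φ x}

variable {φ : α → β}

theorem measurableSet_fiber_eq (hφ : (range φ).Countable)
    (hfib : ∀ b, MeasurableSet (φ ⁻¹' {b})) {g : α → α} (hg : Measurable g) :
    MeasurableSet {x | φ (g x) = φ x} := by
  have : {x | φ (g x) = φ x} = ⋃ b ∈ range φ, g ⁻¹' (φ ⁻¹' {b}) ∩ φ ⁻¹' {b} := by
    ext x
    simp only [mem_ofPred_eq, mem_iUnion, mem_inter_iff, mem_preimage, mem_singleton_iff,
      exists_prop, mem_range, exists_exists_eq_and]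
    exact ⟨fun h => ⟨x, h, rfl⟩, fun ⟨_, h1, h2⟩ => h1.trans h2.symm⟩
  rw [this]
  exact .biUnion hφ fun b _ => (hg (hfib b)).inter (hfib b)

theorem measurable_fiberReturnTime (hT : Measurable T) (hφ : (range φ).Countable)
    (hfib : ∀ b, MeasurableSet (φ ⁻¹' {b})) : Measurable (fiberReturnTime T φ) :=
  measurable_nat_sInf_s5 fun n => (MeasurableSet.const (0 < n)).inter
    (measurableSet_fiber_eq hφ hfib (hT.iterate n))

theorem ae_fiberReturnTime_pos [IsFiniteMeasure μ] (hT : MeasurePreserving T μ μ)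
    (hφ : (range φ).Countable) (hfib : ∀ b, MeasurableSet (φ ⁻¹' {b})) :
    ∀ᵐ x ∂μ, 0 < fiberReturnTime T φ x := by
  have hrec : ∀ᵐ x ∂μ, ∀ b ∈ range φ, x ∈ φ ⁻¹' {b} → ∃ᶠ n in atTop, T^[n] x ∈ φ ⁻¹' {b} :=
    (ae_ball_iff hφ).2 fun b _ =>
      hT.conservative.ae_mem_imp_frequently_image_mem (hfib b).nullMeasurableSet
  filter_upwards [hrec] with x hx
  obtain ⟨n, hn, hret⟩ := ((hx (φ x) ⟨x, rfl⟩ rfl).and_eventually (eventually_gt_atTop 0)).exists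
  exact (Nat.sInf_mem (s := {n | 0 < n ∧ φ (T^[n] x) = φ x}) ⟨n, hret, hn⟩).1

/-- Kac's lemma, summed over the cells of a finite partition. -/
theorem lintegral_fiberReturnTime_le (hT : MeasurePreserving T μ μ) {F : Finset β}
    (hF : ∀ x, φ x ∈ F) (hfib : ∀ b, MeasurableSet (φ ⁻¹' {b})) :
    ∫⁻ x, (fiberReturnTime T φ x : ℝ≥0∞) ∂μ ≤ F.card * μ univ := by
  have hφ : (range φ).Countable := F.countable_toSet.mono (range_subset_iff.2 hF)
  set B : β → ℕ → Set α := fun b t =>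
    φ ⁻¹' {b} ∩ {x | ∀ s, 0 < s → s ≤ t → T^[s] x ∉ φ ⁻¹' {b}}
  have hcover : ∀ t, {x | t < fiberReturnTime T φ x} ⊆ ⋃ b ∈ F, B b t := by
    intro t x hx
    refine mem_biUnion (hF x) ⟨rfl, fun s hs hst hret => ?_⟩
    exact Nat.notMem_of_lt_sInf (hst.trans_lt hx) ⟨hs, hret⟩
  calc ∫⁻ x, (fiberReturnTime T φ x : ℝ≥0∞) ∂μ
      = ∑' t, μ {x | t < fiberReturnTime T φ x} :=
        lintegral_natCast_eq_tsum (measurable_fiberReturnTime hT.measurable hφ hfib)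
    _ ≤ ∑' t, ∑ b ∈ F, μ (B b t) :=
        ENNReal.tsum_le_tsum fun t =>
          (measure_mono (hcover t)).trans (measure_biUnion_finset_le _ _)
    _ = ∑ b ∈ F, ∑' t, μ (B b t) := Summable.tsum_finsetSum fun _ _ => ENNReal.summable
    _ ≤ ∑ _b ∈ F, μ univ := Finset.sum_le_sum fun b _ => tsum_measure_no_return_le hT (hfib b)
    _ = F.card * μ univ := by rw [Finset.sum_const, nsmul_eq_mul]

end FiberReturnTime

section SeqShift

variable {α : Type*}

def seqShift (c : ℤ) (x : ℤ → α) : ℤ → α := fun n => x (n + c)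

@[simp] theorem seqShift_apply (c : ℤ) (x : ℤ → α) (n : ℤ) : seqShift c x n = x (n + c) := rfl

theorem seqShift_seqShift (c d : ℤ) (x : ℤ → α) :
    seqShift c (seqShift d x) = seqShift (c + d) x := by
  ext n; simp [add_assoc]

@[simp] theorem seqShift_zero (x : ℤ → α) : seqShift 0 x = x := by ext n; simp

theorem iterate_seqShift_one (n : ℕ) : (seqShift 1 : (ℤ → α) → ℤ → α)^[n] = seqShift n := by
  induction n with
  | zero => ext x; simp
  | succ n ih =>
    ext x m
    rw [Function.iterate_succ_apply', ih, seqShift_seqShift, add_comm]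
    push_cast; rfl

variable [MeasurableSpace α]

theorem measurable_seqShift (c : ℤ) : Measurable (seqShift c : (ℤ → α) → ℤ → α) :=
  measurable_pi_lambda _ fun n => measurable_pi_apply (n + c)

theorem measurePreserving_seqShift {ν : Measure (ℤ → α)}
    (h : MeasurePreserving (seqShift 1) ν ν) (c : ℤ) : MeasurePreserving (seqShift c) ν ν := by
  have hnat : ∀ n : ℕ, MeasurePreserving (seqShift (n : ℤ)) ν ν := fun n =>
    iterate_seqShift_one (α := α) n ▸ h.iterate n
  obtain ⟨n, rfl | rfl⟩ := Int.eq_nat_or_neg c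
  · exact hnat n
  · refine ⟨measurable_seqShift _, ?_⟩
    conv_lhs =>
      rw [← (hnat n).map_eq, Measure.map_map (measurable_seqShift _) (measurable_seqShift _)]
    have : seqShift (-(n : ℤ)) ∘ seqShift (n : ℤ) = (id : (ℤ → α) → ℤ → α) := by
      funext x; simp [seqShift_seqShift]
    rw [this, Measure.map_id]

end SeqShift

namespace IsNestedIntervalQuantizer

variable {Q : ℕ → ℝ → Set ℝ}

theorem cell_eq_of_mem (hQ : IsNestedIntervalQuantizer Q) {k : ℕ} {y z : ℝ} (h : y ∈ Q k z) :
    Q k y = Q k z :=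
  (hQ.2.2.1 k y z).resolve_right fun hd => hd.ne_of_mem (hQ.1 k y) h rfl

theorem measurableSet_preimage_singleton (hQ : IsNestedIntervalQuantizer Q) (k : ℕ)
    (c : Set ℝ) : MeasurableSet (Q k ⁻¹' {c}) := by
  by_cases hc : c ∈ range (Q k)
  · obtain ⟨z, rfl⟩ := hc
    have : Q k ⁻¹' {Q k z} = Q k z := Set.ext fun y => ⟨fun h => h ▸ hQ.1 k y, hQ.cell_eq_of_mem⟩
    rw [this]
    exact (hQ.2.1 k z).measurableSet
  · rw [preimage_singleton_eq_empty.2 hc]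
    exact .empty

theorem ncard_range_mono (hQ : IsNestedIntervalQuantizer Q)
    (hfin : ∀ k, (range (Q k)).Finite) : Monotone fun k => (range (Q k)).ncard := by
  intro a b hab
  have hnest : ∀ z, Q b z ⊆ Q a z := fun z =>
    antitone_nat_of_succ_le (f := fun k => Q k z) (fun k => hQ.2.2.2.2.1 k z) hab
  have hfac : Function.FactorsThrough (Q a) (Q b) := fun y z h =>
    hQ.cell_eq_of_mem (hnest z (h ▸ hQ.1 b y))
  have hrange : range (Q a) = Function.extend (Q b) (Q a) id '' range (Q b) := by
    rw [← range_comp]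
    exact congrArg range (funext fun y => (hfac.extend_apply id y).symm)
  show (range (Q a)).ncard ≤ _
  rw [hrange]
  exact ncard_image_le (hfin b)

theorem ncard_range_pow_mono (hQ : IsNestedIntervalQuantizer Q)
    (hfin : ∀ k, (range (Q k)).Finite) {l : ℕ → ℕ} (hl : Monotone l) :
    Monotone fun k => (range (Q k)).ncard ^ l k := fun _ b hab =>
  (Nat.pow_le_pow_left (hQ.ncard_range_mono hfin hab) _).trans <|
    Nat.pow_le_pow_right ((ncard_pos (hfin b)).2 (range_nonempty _)) (hl hab)

end IsNestedIntervalQuantizer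

section Chains

variable {Ω : Type*} {Q : ℕ → ℝ → Set ℝ} {l : ℕ → ℕ} {X : ℤ → Ω → ℝ}

noncomputable def recChain (Q : ℕ → ℝ → Set ℝ) (l : ℕ → ℕ) (X : ℤ → Ω → ℝ) (s : ℤ) : ℕ → Ω → ℤ
  | 0, _ => s
  | k + 1, ω => recChain Q l X s k ω + recEta Q l X (k + 1) (recChain Q l X s k ω) ω

theorem recurs_at_recEta {k : ℕ} {b : ℤ} {ω : Ω} (h : 0 < recEta Q l X k b ω) :
    ∀ i < l k, Q k (X (b + recEta Q l X k b ω - i) ω) = Q k (X (b - i) ω) :=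
  (Nat.sInf_mem (Nat.nonempty_of_pos_sInf h)).2

theorem recEta_le_of_recurs {k t : ℕ} {b : ℤ} {ω : Ω} (ht : 0 < t)
    (h : ∀ i < l k, Q k (X (b + t - i) ω) = Q k (X (b - i) ω)) : recEta Q l X k b ω ≤ t :=
  Nat.sInf_le ⟨ht, h⟩

theorem add_recEta_ne_add_recEta {k : ℕ} {p p' : ℤ} {ω : Ω} (hpp : p < p')
    (hpos' : 0 < recEta Q l X k p' ω) :
    p + recEta Q l X k p ω ≠ p' + recEta Q l X k p' ω := by
  intro heq
  have hpos : 0 < recEta Q l X k p ω := by omega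
  -- the block at `p'` recurs where the one at `p` does, so `p' - p` is an earlier gap at `p`
  have hle : recEta Q l X k p ω ≤ (p' - p).toNat := recEta_le_of_recurs (by omega) fun i hi => by
    rw [Int.toNat_of_nonneg (by omega), add_sub_cancel, ← recurs_at_recEta hpos' i hi, ← heq,
      recurs_at_recEta hpos i hi]
  omega

theorem recChain_injective {ω : Ω} (hpos : ∀ k b, 0 < recEta Q l X k b ω) :
    ∀ k, Function.Injective fun s => recChain Q l X s k ω
  | 0 => fun _ _ h => h
  | k + 1 => fun s s' h => recChain_injective hpos k <| by
    rcases lt_trichotomy (recChain Q l X s k ω) (recChain Q l X s' k ω) with hlt | heq | hgt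
    · exact absurd h (add_recEta_ne_add_recEta hlt (hpos _ _))
    · exact heq
    · exact absurd h.symm (add_recEta_ne_add_recEta hgt (hpos _ _))

theorem recZeta_eq_sum (k : ℕ) (ω : Ω) :
    recZeta Q l X k ω =
      ((∑ j ∈ Finset.range k, recEta Q l X (j + 1) (recZeta Q l X j ω) ω : ℕ) : ℤ) := by
  induction k with
  | zero => rfl
  | succ k ih =>
    rw [Finset.sum_range_succ, Nat.cast_add, ← ih]
    rfl

theorem recZeta_eq_recZeta_coord (k : ℕ) (ω : Ω) :
    recZeta Q l X k ω = recZeta Q l coord k (fun n => X n ω) := by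
  induction k with
  | zero => rfl
  | succ k ih =>
    show recZeta Q l X k ω + _ = recZeta Q l _ k _ + _
    rw [ih]
    rfl

end Chains

section PathSpace

variable {Q : ℕ → ℝ → Set ℝ} {l : ℕ → ℕ}

theorem recEta_coord_seqShift (k : ℕ) (b s : ℤ) (x : ℤ → ℝ) :
    recEta Q l coord k b (seqShift s x) = recEta Q l coord k (b + s) x := by
  have hidx : ∀ t i : ℤ, b + t - i + s = b + s + t - i := fun _ _ => by ring
  simp only [recEta, Function.eval, seqShift_apply, hidx, sub_add_eq_add_sub]

theorem recZeta_coord_seqShift (s : ℤ) (k : ℕ) (x : ℤ → ℝ) :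
    s + recZeta Q l coord k (seqShift s x) = recChain Q l coord s k x := by
  induction k with
  | zero => simp [recZeta, recChain]
  | succ k ih =>
    simp only [recZeta, recChain, recEta_coord_seqShift, ← ih]
    rw [add_comm (recZeta Q l coord k (seqShift s x)) s]
    ring

def blockPattern (Q : ℕ → ℝ → Set ℝ) (l : ℕ → ℕ) (k : ℕ) (x : ℤ → ℝ) : Fin (l k) → Set ℝ :=
  fun i => Q k (x (-i))

theorem recEta_coord_zero_eq (k : ℕ) (x : ℤ → ℝ) :
    recEta Q l coord k 0 x = fiberReturnTime (seqShift 1) (blockPattern Q l k) x := by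
  have hidx : ∀ t i : ℤ, 0 + t - i = -i + t := fun _ _ => by ring
  simp only [recEta, fiberReturnTime, iterate_seqShift_one, blockPattern, funext_iff,
    Fin.forall_iff, seqShift_apply, Function.eval, hidx, zero_sub]

theorem measurableSet_blockPattern_preimage (hQ : IsNestedIntervalQuantizer Q) (k : ℕ)
    (p : Fin (l k) → Set ℝ) : MeasurableSet (blockPattern Q l k ⁻¹' {p}) := by
  have : blockPattern Q l k ⁻¹' {p} =
      ⋂ i : Fin (l k), (fun x : ℤ → ℝ => x (-((i : ℕ) : ℤ))) ⁻¹' (Q k ⁻¹' {p i}) := by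
    ext x
    simp [blockPattern, funext_iff]
  rw [this]
  exact .iInter fun i => measurable_pi_apply _ (hQ.measurableSet_preimage_singleton k (p i))

theorem countable_range_blockPattern (hQ : IsNestedIntervalQuantizer Q) (k : ℕ) :
    (range (blockPattern Q l k)).Countable :=
  (countable_pi fun _ => hQ.2.2.2.1 k).mono <| by
    rintro _ ⟨x, rfl⟩ i
    exact mem_range_self _

theorem measurable_recEta_coord (hQ : IsNestedIntervalQuantizer Q) (k : ℕ) (b : ℤ) :
    Measurable (recEta Q l coord k b) := by
  have : recEta Q l coord k b = recEta Q l coord k 0 ∘ seqShift b := by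
    ext x
    simp [recEta_coord_seqShift]
  rw [this, funext (recEta_coord_zero_eq k)]
  exact (measurable_fiberReturnTime (measurable_seqShift 1) (countable_range_blockPattern hQ k)
    (measurableSet_blockPattern_preimage hQ k)).comp (measurable_seqShift b)

theorem measurable_recZeta_coord (hQ : IsNestedIntervalQuantizer Q) :
    ∀ k, Measurable (recZeta Q l coord k)
  | 0 => measurable_const
  | k + 1 => (measurable_recZeta_coord hQ k).add <|
      (measurable_recZeta_coord hQ k).comp_countable_index fun b =>
        measurable_from_nat.comp (measurable_recEta_coord hQ (k + 1) b)

theorem measurable_seqShift_recZeta_coord (hQ : IsNestedIntervalQuantizer Q) (k : ℕ) :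
    Measurable fun x => seqShift (recZeta Q l coord k x) x :=
  measurable_pi_lambda _ fun n => (measurable_recZeta_coord hQ k).comp_countable_index
    (g := fun b (x : ℤ → ℝ) => x (n + b)) fun _ => measurable_pi_apply _

theorem measurable_recEta_recZeta_coord (hQ : IsNestedIntervalQuantizer Q) (k : ℕ) :
    Measurable fun x => recEta Q l coord (k + 1) (recZeta Q l coord k x) x :=
  (measurable_recZeta_coord hQ k).comp_countable_index fun b => measurable_recEta_coord hQ _ b

variable {ν : Measure (ℤ → ℝ)}

theorem ae_recEta_coord_pos [IsFiniteMeasure ν] (hν : MeasurePreserving (seqShift 1) ν ν)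
    (hQ : IsNestedIntervalQuantizer Q) : ∀ᵐ x ∂ν, ∀ k b, 0 < recEta Q l coord k b x := by
  refine ae_all_iff.2 fun k => ae_all_iff.2 fun b => ?_
  have h0 : ∀ᵐ x ∂ν, 0 < recEta Q l coord k 0 x := by
    simp only [recEta_coord_zero_eq]
    exact ae_fiberReturnTime_pos hν (countable_range_blockPattern hQ k)
      (measurableSet_blockPattern_preimage hQ k)
  filter_upwards [(measurePreserving_seqShift hν b).quasiMeasurePreserving.ae h0] with x hx
  rwa [recEta_coord_seqShift, zero_add] at hx

theorem lintegral_recEta_coord_zero_le [IsProbabilityMeasure ν]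
    (hν : MeasurePreserving (seqShift 1) ν ν) (hQ : IsNestedIntervalQuantizer Q)
    (hfin : ∀ k, (range (Q k)).Finite) (k : ℕ) :
    ∫⁻ x, (recEta Q l coord k 0 x : ℝ≥0∞) ∂ν ≤ ((range (Q k)).ncard : ℝ≥0∞) ^ l k := by
  simp only [recEta_coord_zero_eq]
  refine (lintegral_fiberReturnTime_le hν (F := Fintype.piFinset fun _ => (hfin k).toFinset)
    (fun x => by simp [blockPattern]) (measurableSet_blockPattern_preimage hQ k)).trans_eq ?_
  simp [Fintype.card_piFinset, ncard_eq_toFinset_card _ (hfin k)]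

theorem map_seqShift_recZeta_coord_le (hν : MeasurePreserving (seqShift 1) ν ν)
    (hQ : IsNestedIntervalQuantizer Q) (hpos : ∀ᵐ x ∂ν, ∀ k b, 0 < recEta Q l coord k b x)
    (k : ℕ) : ν.map (fun x => seqShift (recZeta Q l coord k x) x) ≤ ν := by
  refine Measure.le_iff.2 fun E hE => ?_
  rw [Measure.map_apply (measurable_seqShift_recZeta_coord hQ k) hE]
  set S : ℤ → Set (ℤ → ℝ) := fun b => {y | recZeta Q l coord k (seqShift (-b) y) = b} ∩ E
  have hS : ∀ b, MeasurableSet (S b) := fun b =>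
    ((measurable_recZeta_coord hQ k).comp (measurable_seqShift _)
      (measurableSet_singleton b)).inter hE
  have hcover : (fun x => seqShift (recZeta Q l coord k x) x) ⁻¹' E ⊆ ⋃ b, seqShift b ⁻¹' S b :=
    fun x hx => mem_iUnion.2 ⟨recZeta Q l coord k x, by simpa [S, seqShift_seqShift] using hx⟩
  -- chains started at distinct positions never merge, so the `S b` are a.e. disjoint
  have hdisj : Pairwise (Function.onFun (AEDisjoint ν) S) := by
    intro b b' hbb'
    refine measure_mono_null ?_ (ae_iff.1 hpos)
    rintro y ⟨⟨hb, -⟩, hb', -⟩ hy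
    refine hbb' ?_
    have hchain : ∀ c, recZeta Q l coord k (seqShift (-c) y) = c →
        recChain Q l coord (-c) k y = 0 :=
      fun c hc => by rw [← recZeta_coord_seqShift, hc, neg_add_cancel]
    exact neg_injective (recChain_injective hy k ((hchain b hb).trans (hchain b' hb').symm))
  calc ν ((fun x => seqShift (recZeta Q l coord k x) x) ⁻¹' E)
      ≤ ∑' b, ν (seqShift b ⁻¹' S b) := (measure_mono hcover).trans (measure_iUnion_le _)
    _ = ∑' b, ν (S b) := tsum_congr fun b =>
        (measurePreserving_seqShift hν b).measure_preimage (hS b).nullMeasurableSet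
    _ = ν (⋃ b, S b) := (measure_iUnion₀ hdisj fun b => (hS b).nullMeasurableSet).symm
    _ ≤ ν E := measure_mono (iUnion_subset fun _ => inter_subset_right)

theorem lintegral_recEta_recZeta_coord_le (hν : MeasurePreserving (seqShift 1) ν ν)
    (hQ : IsNestedIntervalQuantizer Q) (hpos : ∀ᵐ x ∂ν, ∀ k b, 0 < recEta Q l coord k b x)
    (k : ℕ) :
    ∫⁻ x, (recEta Q l coord (k + 1) (recZeta Q l coord k x) x : ℝ≥0∞) ∂ν ≤
      ∫⁻ x, (recEta Q l coord (k + 1) 0 x : ℝ≥0∞) ∂ν := by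
  have hshift : ∀ x, recEta Q l coord (k + 1) (recZeta Q l coord k x) x =
      recEta Q l coord (k + 1) 0 (seqShift (recZeta Q l coord k x) x) := fun x => by
    rw [recEta_coord_seqShift, zero_add]
  calc ∫⁻ x, (recEta Q l coord (k + 1) (recZeta Q l coord k x) x : ℝ≥0∞) ∂ν
      = ∫⁻ y, (recEta Q l coord (k + 1) 0 y : ℝ≥0∞)
          ∂(ν.map fun x => seqShift (recZeta Q l coord k x) x) := by
        simp only [hshift]
        exact (lintegral_map (measurable_from_nat.comp (measurable_recEta_coord hQ _ 0))
          (measurable_seqShift_recZeta_coord hQ k)).symm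
    _ ≤ ∫⁻ x, (recEta Q l coord (k + 1) 0 x : ℝ≥0∞) ∂ν :=
        lintegral_mono' (map_seqShift_recZeta_coord_le hν hQ hpos k) le_rfl

theorem lintegral_sum_recEta_recZeta_coord_le [IsProbabilityMeasure ν]
    (hν : MeasurePreserving (seqShift 1) ν ν) (hQ : IsNestedIntervalQuantizer Q)
    (hfin : ∀ k, (range (Q k)).Finite) (hl : Monotone l) (k : ℕ) :
    ∫⁻ x, ((∑ j ∈ Finset.range k, recEta Q l coord (j + 1) (recZeta Q l coord j x) x : ℕ) : ℝ≥0∞)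
      ∂ν ≤ k * ((range (Q k)).ncard : ℝ≥0∞) ^ l k := by
  have hpos := ae_recEta_coord_pos (l := l) hν hQ
  push_cast
  rw [lintegral_finsetSum
    (f := fun j x => (recEta Q l coord (j + 1) (recZeta Q l coord j x) x : ℝ≥0∞))
    _ fun j _ => measurable_from_nat.comp (measurable_recEta_recZeta_coord hQ j)]
  calc ∑ j ∈ Finset.range k, ∫⁻ x, (recEta Q l coord (j + 1) (recZeta Q l coord j x) x : ℝ≥0∞) ∂ν
      ≤ ∑ j ∈ Finset.range k, ((range (Q (j + 1))).ncard : ℝ≥0∞) ^ l (j + 1) :=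
        Finset.sum_le_sum fun j _ => (lintegral_recEta_recZeta_coord_le hν hQ hpos j).trans
          (lintegral_recEta_coord_zero_le hν hQ hfin (j + 1))
    _ ≤ ∑ _j ∈ Finset.range k, ((range (Q k)).ncard : ℝ≥0∞) ^ l k :=
        Finset.sum_le_sum fun j hj => by
          exact_mod_cast hQ.ncard_range_pow_mono hfin hl (Finset.mem_range.1 hj)
    _ = k * ((range (Q k)).ncard : ℝ≥0∞) ^ l k := by simp

theorem measure_le_recZeta_coord_le [IsProbabilityMeasure ν]
    (hν : MeasurePreserving (seqShift 1) ν ν) (hQ : IsNestedIntervalQuantizer Q)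
    (hfin : ∀ k, (range (Q k)).Finite) (hl : Monotone l) (k : ℕ) {c : ℝ} (hc : 0 < c) :
    ν {x | c ≤ recZeta Q l coord k x} ≤
      ENNReal.ofReal (k * (range (Q k)).ncard ^ l k / c) := by
  set Z : (ℤ → ℝ) → ℕ := fun x =>
    ∑ j ∈ Finset.range k, recEta Q l coord (j + 1) (recZeta Q l coord j x) x
  have hZ : Measurable Z := Finset.measurable_sum _ fun j _ => measurable_recEta_recZeta_coord hQ j
  have hsub : {x | c ≤ recZeta Q l coord k x} ⊆ {x | ENNReal.ofReal c ≤ (Z x : ℝ≥0∞)} :=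
    fun x hx => by
      rw [mem_ofPred_eq, recZeta_eq_sum, Int.cast_natCast] at hx
      exact (ENNReal.ofReal_le_ofReal hx).trans_eq (ENNReal.ofReal_natCast _)
  rw [ENNReal.ofReal_div_of_pos hc, ENNReal.le_div_iff_mul_le (.inl (by simpa using hc))
    (.inl ENNReal.ofReal_ne_top), mul_comm]
  calc ENNReal.ofReal c * ν {x | c ≤ recZeta Q l coord k x}
      ≤ ENNReal.ofReal c * ν {x | ENNReal.ofReal c ≤ (Z x : ℝ≥0∞)} := by gcongr
    _ ≤ ∫⁻ x, (Z x : ℝ≥0∞) ∂ν :=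
        mul_meas_ge_le_lintegral₀ (measurable_from_nat.comp hZ).aemeasurable _
    _ ≤ k * ((range (Q k)).ncard : ℝ≥0∞) ^ l k :=
        lintegral_sum_recEta_recZeta_coord_le hν hQ hfin hl k
    _ = ENNReal.ofReal (k * (range (Q k)).ncard ^ l k) := by
        rw [ENNReal.ofReal_mul (by positivity), ENNReal.ofReal_pow (by positivity)]
        simp

theorem ae_eventually_recZeta_coord_lt [IsProbabilityMeasure ν]
    (hν : MeasurePreserving (seqShift 1) ν ν) (hQ : IsNestedIntervalQuantizer Q)
    (hfin : ∀ k, (range (Q k)).Finite) (hl : Monotone l) {ε : ℝ}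
    (hsum : Summable fun k : ℕ => ((k : ℝ) + 1) * (2 : ℝ) ^ (-((l k : ℝ) * ε))) :
    ∀ᵐ x ∂ν, ∀ᶠ k in atTop,
      (recZeta Q l coord k x : ℝ) <
        ((range (Q k)).ncard : ℝ) ^ l k * (2 : ℝ) ^ ((l k : ℝ) * ε) := by
  refine ae_eventually_lt_of_summable hsum fun k => ?_
  have hN : (0 : ℝ) < ((range (Q k)).ncard : ℝ) ^ l k :=
    pow_pos (Nat.cast_pos.2 ((ncard_pos (hfin k)).2 (range_nonempty _))) _
  have h2 : (0 : ℝ) < (2 : ℝ) ^ ((l k : ℝ) * ε) := Real.rpow_pos_of_pos two_pos _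
  refine (measure_le_recZeta_coord_le hν hQ hfin hl k (mul_pos hN h2)).trans
    (ENNReal.ofReal_le_ofReal ?_)
  set N : ℝ := ((range (Q k)).ncard : ℝ) ^ l k
  calc (k : ℝ) * N / (N * 2 ^ ((l k : ℝ) * ε)) = k * ((2 : ℝ) ^ ((l k : ℝ) * ε))⁻¹ := by
        field_simp
    _ ≤ (k + 1) * (2 : ℝ) ^ (-((l k : ℝ) * ε)) := by
        rw [Real.rpow_neg zero_le_two]
        gcongr
        linarith

end PathSpace

theorem intermittent_stopping_time_growth_general
    {Ω : Type*} [MeasurableSpace Ω] (μ : Measure Ω) [IsProbabilityMeasure μ]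
    (X : ℤ → Ω → ℝ) (hXmeas : ∀ n, Measurable (X n)) (hstat : IsStationaryRealProcess μ X)
    (Q : ℕ → ℝ → Set ℝ) (hQ : IsNestedIntervalQuantizer Q)
    (hQfin : ∀ k, (Set.range (Q k)).Finite)
    (l : ℕ → ℕ) (hl : GoodLengths l)
    (ε : ℝ)
    (hsum : Summable (fun k : ℕ => ((k : ℝ) + 1) * (2 : ℝ) ^ (-((l k : ℝ) * ε)))) :
    ∀ᵐ ω ∂μ, ∀ᶠ k in Filter.atTop,
      ((recZeta Q l X k ω : ℝ)) <
        ((Set.range (Q k)).ncard : ℝ) ^ (l k) * (2 : ℝ) ^ ((l k : ℝ) * ε) := by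
  have hpath : Measurable fun ω (n : ℤ) => X n ω := measurable_pi_lambda _ hXmeas
  have hν : MeasurePreserving (seqShift 1) (μ.map fun ω n => X n ω) (μ.map fun ω n => X n ω) :=
    ⟨measurable_seqShift 1, by rw [Measure.map_map (measurable_seqShift 1) hpath]; exact hstat⟩
  have := Measure.isProbabilityMeasure_map (μ := μ) hpath.aemeasurable
  filter_upwards [ae_of_ae_map hpath.aemeasurable
    (ae_eventually_recZeta_coord_lt hν hQ hQfin hl.1 hsum)] with ω hω
  exact hω.mono fun k hk => by rwa [recZeta_eq_recZeta_coord]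

/-- Growth bound for the stopping times with finite partitions: if
`∑ (k+1) 2^{-l_k ε} < ∞` then `ζ_k < |P_k|^{l_k} · 2^{l_k ε}` eventually a.s.,
where `|P_k|` is the number of cells of the `k`-th partition. -/
theorem intermittent_stopping_time_growth
    {Ω : Type*} [MeasurableSpace Ω] (μ : Measure Ω) [IsProbabilityMeasure μ]
    (X : ℤ → Ω → ℝ) (hXmeas : ∀ n, Measurable (X n)) (hstat : IsStationaryRealProcess μ X)
    (Q : ℕ → ℝ → Set ℝ) (hQ : IsNestedIntervalQuantizer Q)
    (hQfin : ∀ k, (Set.range (Q k)).Finite)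
    (l : ℕ → ℕ) (hl : GoodLengths l)
    (ε : ℝ) (hε : 0 < ε)
    (hsum : Summable (fun k : ℕ => ((k : ℝ) + 1) * (2 : ℝ) ^ (-((l k : ℝ) * ε)))) :
    ∀ᵐ ω ∂μ, ∀ᶠ k in Filter.atTop,
      ((recZeta Q l X k ω : ℝ)) <
        ((Set.range (Q k)).ncard : ℝ) ^ (l k) * (2 : ℝ) ^ ((l k : ℝ) * ε) :=
  intermittent_stopping_time_growth_general μ X hXmeas hstat Q hQ hQfin l hl ε hsum
end
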